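/- arXiv:2309.04829 — 2 statements merged into one kernel-verified Lean document; each statement's English description precedes it below -/
import Mathlib

section
/- (Kilmoyer) Let W be a finite Weyl group (or more generally a Coxeter group) with simple reflections indexed by Δ, and let P, Q ⊆ Δ. If d is the minimal length element of a double coset W_P d W_Q (equivalently d(Q) ⊆ R⁺ and d⁻¹(P) ⊆ R⁺), then W_P ∩ d W_Q d⁻¹ = W_{P ∩ d(Q)}. -/
/-!
The parity argument of Tits: `s i ↦ ((x, e) ↦ (s i x s i, e + [x = s i]))` respects the Coxeter
relations, so it defines an action of `W` on `W × ZMod 2`, and evaluating it on words shows that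
the parity of the number of occurrences of `t` in the left inversion sequence of a word depends
only on the product of the word. This gives the exchange property: a left descent `s i` of `π ω`
occurs in the left inversion sequence of `ω`, i.e. `s i * π ω` is `π ω` with one letter deleted.

For `d` minimal in `W_P d W_Q`, exchange gives `ℓ (p d q) = ℓ p + ℓ d + ℓ q` on each side. If
`w ∈ W_P ∩ d W_Q d⁻¹` has a left descent `s i`, `i ∈ P`, then exchanging `s i` into a reduced word
of `w d = d u` cannot delete a letter of `d`, so `d⁻¹ s i d ∈ W_Q`; as `ℓ (s i d) = ℓ d + 1`,
additivity forces `ℓ (d⁻¹ s i d) = 1`, i.e. `s i = d s j d⁻¹` with `j ∈ Q`. Induction on `ℓ w`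
finishes the proof.
-/

namespace CoxeterSystem

open List

variable {B W : Type*} [Group W] {M : CoxeterMatrix B} (cs : CoxeterSystem M W)

local prefix:100 "s" => cs.simple
local prefix:100 "π" => cs.wordProd
local prefix:100 "ℓ" => cs.length
local prefix:100 "lis " => cs.leftInvSeq

theorem prod_map_alternatingWord_two_mul {G : Type*} [Monoid G] (f : B → G) (i j : B) (p : ℕ) :
    ((alternatingWord i j (2 * p)).map f).prod = (f i * f j) ^ p := by
  induction p with
  | zero => simp [alternatingWord]
  | succ p ih =>
    rw [Nat.mul_succ, alternatingWord_succ', alternatingWord_succ', pow_succ', ← ih]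
    simp [mul_assoc]

theorem leftInvSeq_alternatingWord_two_mul (i j : B) (p : ℕ) :
    lis (alternatingWord i j (2 * p)) =
      (range (2 * p)).map fun k => π alternatingWord j i (2 * k + 1) :=
  ext_getElem (by simp) fun k _ hk => by
    rw [getElem_leftInvSeq_alternatingWord cs i j p k (by simpa using hk)]
    simp

/-- The left inversion sequence of the alternating word of length `2 * M i j` lists every
reflection of the dihedral subgroup `⟨s i, s j⟩` twice. -/
theorem even_count_leftInvSeq_alternatingWord [DecidableEq W] (i j : B) (t : W) :
    Even ((lis (alternatingWord i j (2 * M i j))).count t) := by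
  have hperiodic : ∀ k, π alternatingWord j i (2 * (M i j + k) + 1) =
      π alternatingWord j i (2 * k + 1) := fun k => by
    rw [prod_alternatingWord_eq_mul_pow, prod_alternatingWord_eq_mul_pow,
      show (2 * (M i j + k) + 1) / 2 = M j i + k by rw [M.symmetric]; omega,
      show (2 * k + 1) / 2 = k by omega, pow_add, simple_mul_simple_pow, one_mul]
    simp [parity_simps]
  rw [leftInvSeq_alternatingWord_two_mul, two_mul, range_add, map_append, map_map, count_append]
  simp only [Function.comp_def, hperiodic]
  exact ⟨_, rfl⟩

theorem conj_simple_eq_simple_iff (i : B) {x : W} : MulAut.conj (s i) x = s i ↔ x = s i := by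
  simpa using (MulAut.conj (s i)).apply_eq_iff_eq (x := x) (y := s i)

section ParityRepresentation

open scoped Classical

noncomputable def parityPerm (i : B) : Equiv.Perm (W × ZMod 2) :=
  Function.Involutive.toPerm
    (fun x => (MulAut.conj (s i) x.1, x.2 + if x.1 = s i then 1 else 0)) fun x => by
      ext
      · simp [mul_assoc]
      · simp only [conj_simple_eq_simple_iff, add_assoc, CharTwo.add_self_eq_zero, add_zero]

theorem parityPerm_apply (i : B) (x : W × ZMod 2) :
    cs.parityPerm i x = (MulAut.conj (s i) x.1, x.2 + if x.1 = s i then 1 else 0) :=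
  rfl

theorem prod_map_parityPerm_apply (ω : List B) (x : W) (e : ZMod 2) :
    (ω.map cs.parityPerm).prod (x, e) =
      (MulAut.conj (π ω) x, e + (lis ω).count (MulAut.conj (π ω) x)) := by
  induction ω generalizing x e with
  | nil => simp
  | cons i ω ih =>
    set y := MulAut.conj (π ω) x
    have hy : MulAut.conj (π (i :: ω)) x = MulAut.conj (s i) y := by
      simp [y, wordProd_cons, MulAut.mul_apply]
    rw [map_cons, prod_cons, Equiv.Perm.mul_apply, ih, parityPerm_apply, hy, leftInvSeq,
      count_cons, count_map_of_injective _ _ (MulAut.conj (s i)).injective]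
    simp only [beq_iff_eq, eq_comm (a := s i), conj_simple_eq_simple_iff]
    push_cast
    rw [add_assoc]

theorem isLiftable_parityPerm : M.IsLiftable cs.parityPerm := fun i j => by
  ext ⟨x, e⟩ : 1
  rw [← prod_map_alternatingWord_two_mul, prod_map_parityPerm_apply, wordProd,
    prod_map_alternatingWord_two_mul, simple_mul_simple_pow, map_one, MulAut.one_apply]
  obtain ⟨n, hn⟩ := cs.even_count_leftInvSeq_alternatingWord i j x
  simp [hn, ← two_mul, CharTwo.two_eq_zero]

noncomputable def parityRep : W →* Equiv.Perm (W × ZMod 2) :=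
  cs.lift ⟨cs.parityPerm, cs.isLiftable_parityPerm⟩

theorem parityRep_wordProd (ω : List B) : cs.parityRep (π ω) = (ω.map cs.parityPerm).prod := by
  rw [wordProd, map_list_prod, map_map]
  congr 2
  ext1 i
  exact cs.lift_apply_simple cs.isLiftable_parityPerm i

theorem count_leftInvSeq_congr {ω ω' : List B} (h : π ω = π ω') (t : W) :
    ((lis ω).count t : ZMod 2) = (lis ω').count t := by
  have := congr($(congrArg cs.parityRep h) (MulAut.conj (π ω)⁻¹ t, 0))
  rw [parityRep_wordProd, parityRep_wordProd, prod_map_parityPerm_apply,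
    prod_map_parityPerm_apply, ← h] at this
  simpa [mul_assoc] using congrArg Prod.snd this

theorem simple_mem_leftInvSeq_of_isLeftDescent {ω : List B} {i : B}
    (hi : cs.IsLeftDescent (π ω) i) : s i ∈ lis ω := by
  obtain ⟨τ, hτ, hτω⟩ := cs.exists_isReduced (s i * π ω)
  have hnotmem : s i ∉ (lis τ).map (MulAut.conj (s i)) := fun hmem => by
    obtain ⟨y, hy, hys⟩ := mem_map.mp hmem
    rw [conj_simple_eq_simple_iff] at hys
    have := (cs.isLeftInversion_of_mem_leftInvSeq hτ (hys ▸ hy)).2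
    rw [← hτω, simple_mul_simple_cancel_left] at this
    exact lt_asymm this hi
  have hcount := cs.count_leftInvSeq_congr
    (show π (i :: τ) = π ω by rw [wordProd_cons, ← hτω, simple_mul_simple_cancel_left]) (s i)
  rw [leftInvSeq, count_cons, count_eq_zero_of_not_mem hnotmem] at hcount
  refine count_pos_iff.mp (Nat.pos_of_ne_zero fun h0 => ?_)
  simp [h0] at hcount

theorem exists_eraseIdx_of_isLeftDescent {ω : List B} {i : B}
    (hi : cs.IsLeftDescent (π ω) i) : ∃ k < ω.length, s i * π ω = π (ω.eraseIdx k) := by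
  obtain ⟨k, hk, hki⟩ := getElem_of_mem (cs.simple_mem_leftInvSeq_of_isLeftDescent hi)
  refine ⟨k, by simpa using hk, ?_⟩
  rw [← getD_leftInvSeq_mul_wordProd, getD_eq_getElem _ _ hk, hki]

end ParityRepresentation

theorem exists_sublist_of_not_isReduced {ω : List B} (hω : ¬cs.IsReduced ω) :
    ∃ ω', ω' <+ ω ∧ ω'.length < ω.length ∧ π ω' = π ω := by
  induction ω with
  | nil => exact absurd (by simp [IsReduced]) hω
  | cons i τ ih =>
    by_cases hτ : cs.IsReduced τ
    · have hi : cs.IsLeftDescent (π τ) i := by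
        rcases cs.length_simple_mul (π τ) i with h | h
        · exact absurd (by simp [IsReduced, wordProd_cons, h, hτ.eq]) hω
        · exact cs.isLeftDescent_iff.mpr h
      obtain ⟨k, hk, hki⟩ := cs.exists_eraseIdx_of_isLeftDescent hi
      refine ⟨τ.eraseIdx k, (eraseIdx_sublist τ k).cons i, ?_, by rw [wordProd_cons, hki]⟩
      simp [length_eraseIdx_of_lt hk]
    · obtain ⟨τ', hsub, hlen, hprod⟩ := ih hτ
      exact ⟨i :: τ', hsub.cons_cons i, by simpa using hlen,
        by rw [wordProd_cons, wordProd_cons, hprod]⟩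

theorem mem_closure_simple_image_iff {P : Set B} {w : W} :
    w ∈ Subgroup.closure (cs.simple '' P) ↔ ∃ ω : List B, (∀ i ∈ ω, i ∈ P) ∧ π ω = w := by
  constructor
  · intro hw
    induction hw using Subgroup.closure_induction with
    | mem x hx =>
      obtain ⟨i, hi, rfl⟩ := hx
      exact ⟨[i], by simpa using hi, wordProd_singleton cs i⟩
    | one => exact ⟨[], by simp, wordProd_nil cs⟩
    | mul x y _ _ hx hy =>
      obtain ⟨ω, hω, rfl⟩ := hx
      obtain ⟨ω', hω', rfl⟩ := hy
      exact ⟨ω ++ ω', by simp_all [or_imp], wordProd_append cs ω ω'⟩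
    | inv x _ hx =>
      obtain ⟨ω, hω, rfl⟩ := hx
      exact ⟨ω.reverse, by simpa using hω, wordProd_reverse cs ω⟩
  · rintro ⟨ω, hω, rfl⟩
    induction ω with
    | nil => exact one_mem _
    | cons i ω ih =>
      rw [wordProd_cons]
      exact mul_mem (Subgroup.subset_closure ⟨i, hω i mem_cons_self, rfl⟩)
        (ih fun j hj => hω j (mem_cons_of_mem i hj))

theorem exists_isReduced_of_mem_closure {P : Set B} {w : W}
    (hw : w ∈ Subgroup.closure (cs.simple '' P)) :
    ∃ ω : List B, cs.IsReduced ω ∧ (∀ i ∈ ω, i ∈ P) ∧ π ω = w := by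
  obtain ⟨ω, hω, rfl⟩ := cs.mem_closure_simple_image_iff.mp hw
  clear hw
  induction hn : ω.length using Nat.strong_induction_on generalizing ω with
  | _ n ih =>
    by_cases hred : cs.IsReduced ω
    · exact ⟨ω, hred, hω, rfl⟩
    obtain ⟨ω', hsub, hlen, hprod⟩ := cs.exists_sublist_of_not_isReduced hred
    rw [← hprod]
    exact ih _ (hn ▸ hlen) ω' (fun i hi => hω i (hsub.subset hi)) rfl

theorem exists_isLeftDescent_of_mem_closure {P : Set B} {w : W}
    (hw : w ∈ Subgroup.closure (cs.simple '' P)) (hw1 : w ≠ 1) :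
    ∃ i ∈ P, cs.IsLeftDescent w i := by
  obtain ⟨_ | ⟨i, τ⟩, hred, hP, rfl⟩ := cs.exists_isReduced_of_mem_closure hw
  · exact absurd (wordProd_nil cs) hw1
  refine ⟨i, hP i mem_cons_self, ?_⟩
  rw [IsLeftDescent, wordProd_cons, simple_mul_simple_cancel_left, ← wordProd_cons, hred.eq]
  exact (cs.length_wordProd_le τ).trans_lt (by simp)

theorem exists_mem_eq_simple_of_length_eq_one {Q : Set B} {v : W}
    (hv : v ∈ Subgroup.closure (cs.simple '' Q)) (h1 : ℓ v = 1) : ∃ j ∈ Q, v = s j := by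
  obtain ⟨ω, hred, hQ, rfl⟩ := cs.exists_isReduced_of_mem_closure hv
  obtain ⟨j, rfl⟩ := List.length_eq_one_iff.mp (hred.eq ▸ h1)
  exact ⟨j, hQ j mem_cons_self, wordProd_singleton cs j⟩

theorem isLeftDescent_or_exists_eraseIdx_of_isLeftDescent_append {α β : List B} {i : B}
    (hα : cs.IsReduced α) (hi : cs.IsLeftDescent (π (α ++ β)) i) :
    cs.IsLeftDescent (π α) i ∨ ∃ k < β.length, s i * π α * π β = π α * π (β.eraseIdx k) := by
  obtain ⟨k, hk, hki⟩ := cs.exists_eraseIdx_of_isLeftDescent hi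
  rw [wordProd_append, ← mul_assoc] at hki
  rcases lt_or_ge k α.length with hkα | hkα
  · left
    rw [eraseIdx_append_of_lt_length hkα, wordProd_append, mul_left_inj] at hki
    rw [IsLeftDescent, hki, hα.eq]
    exact (cs.length_wordProd_le _).trans_lt (by simp [length_eraseIdx_of_lt hkα]; omega)
  · right
    rw [eraseIdx_append_of_length_le hkα, wordProd_append] at hki
    exact ⟨k - α.length, by simp at hk; omega, hki⟩

theorem length_mul_eq_add_of_le_length_mul_left {P : Set B} {d p : W}
    (hd : ∀ p ∈ Subgroup.closure (cs.simple '' P), ℓ d ≤ ℓ (p * d))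
    (hp : p ∈ Subgroup.closure (cs.simple '' P)) : ℓ (p * d) = ℓ p + ℓ d := by
  obtain ⟨ω, hred, hP, rfl⟩ := cs.exists_isReduced_of_mem_closure hp
  clear hp
  rw [hred.eq]
  induction ω with
  | nil => simp
  | cons j τ ih =>
    have hτ : cs.IsReduced τ := hred.drop 1
    have hPτ : ∀ i ∈ τ, i ∈ P := fun i hi => hP i (mem_cons_of_mem j hi)
    rw [wordProd_cons, mul_assoc, length_cons, add_right_comm, ← ih hτ hPτ]
    refine (cs.length_simple_mul _ j).resolve_right fun hdesc => ?_
    obtain ⟨α, hα, rfl⟩ := cs.exists_isReduced d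
    rw [← wordProd_append] at hdesc
    rcases cs.isLeftDescent_or_exists_eraseIdx_of_isLeftDescent_append hτ
      (cs.isLeftDescent_iff.mpr hdesc) with hτj | ⟨k, hk, hki⟩
    · rw [IsLeftDescent, ← wordProd_cons, hred.eq, hτ.eq] at hτj
      simp at hτj
    · have hconj : (π τ)⁻¹ * s j * π τ ∈ Subgroup.closure (cs.simple '' P) :=
        mul_mem (mul_mem (inv_mem (cs.mem_closure_simple_image_iff.mpr ⟨τ, hPτ, rfl⟩))
          (Subgroup.subset_closure ⟨j, hP j mem_cons_self, rfl⟩))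
          (cs.mem_closure_simple_image_iff.mpr ⟨τ, hPτ, rfl⟩)
      have hle := hd _ hconj
      rw [show (π τ)⁻¹ * s j * π τ * π α = π (α.eraseIdx k) by
        simp only [mul_assoc, hki, inv_mul_cancel_left], hα.eq] at hle
      have := cs.length_wordProd_le (α.eraseIdx k)
      rw [length_eraseIdx_of_lt hk] at this
      omega

theorem length_mul_eq_add_of_le_length_mul_right {Q : Set B} {d q : W}
    (hd : ∀ q ∈ Subgroup.closure (cs.simple '' Q), ℓ d ≤ ℓ (d * q))
    (hq : q ∈ Subgroup.closure (cs.simple '' Q)) : ℓ (d * q) = ℓ d + ℓ q := by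
  have hd' : ∀ q ∈ Subgroup.closure (cs.simple '' Q), ℓ d⁻¹ ≤ ℓ (q * d⁻¹) := fun q hq => by
    simpa [← length_inv cs (q * d⁻¹)] using hd q⁻¹ (inv_mem hq)
  have := cs.length_mul_eq_add_of_le_length_mul_left hd' (inv_mem hq)
  rwa [← mul_inv_rev, length_inv, length_inv, length_inv, add_comm] at this

theorem exists_simple_eq_conj_of_isLeftDescent {P Q : Set B} {d w u : W} {i : B}
    (hmin : ∀ p ∈ Subgroup.closure (cs.simple '' P),
      ∀ q ∈ Subgroup.closure (cs.simple '' Q), ℓ d ≤ ℓ (p * d * q))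
    (hw : w ∈ Subgroup.closure (cs.simple '' P)) (hu : u ∈ Subgroup.closure (cs.simple '' Q))
    (hwu : w * d = d * u) (hi : i ∈ P) (hdesc : cs.IsLeftDescent w i) :
    ∃ j ∈ Q, s i = d * s j * d⁻¹ := by
  have hsi : s i ∈ Subgroup.closure (cs.simple '' P) := Subgroup.subset_closure ⟨i, hi, rfl⟩
  have hleft : ∀ p ∈ Subgroup.closure (cs.simple '' P), ℓ (p * d) = ℓ p + ℓ d := fun _ =>
    cs.length_mul_eq_add_of_le_length_mul_left fun p hp => by simpa using hmin p hp 1 (one_mem _)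
  have hright : ∀ q ∈ Subgroup.closure (cs.simple '' Q), ℓ (d * q) = ℓ d + ℓ q := fun _ =>
    cs.length_mul_eq_add_of_le_length_mul_right fun q hq => by simpa using hmin 1 (one_mem _) q hq
  obtain ⟨α, hα, hαd⟩ := cs.exists_isReduced d
  obtain ⟨β, -, hQ, rfl⟩ := cs.exists_isReduced_of_mem_closure hu
  have hdesc' : cs.IsLeftDescent (π (α ++ β)) i := by
    rw [IsLeftDescent, wordProd_append, ← hαd, ← hwu, ← mul_assoc, hleft _ hw]
    exact (cs.length_mul_le _ _).trans_lt (Nat.add_lt_add_right hdesc _)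
  rcases cs.isLeftDescent_or_exists_eraseIdx_of_isLeftDescent_append hα hdesc'
    with hαi | ⟨k, -, hki⟩
  · rw [← hαd, IsLeftDescent, hleft _ hsi, length_simple] at hαi
    omega
  rw [← hαd] at hki
  have hv : d⁻¹ * s i * d ∈ Subgroup.closure (cs.simple '' Q) := by
    rw [show d⁻¹ * s i * d = π (β.eraseIdx k) * (π β)⁻¹ by
      calc d⁻¹ * s i * d = d⁻¹ * (s i * d * π β) * (π β)⁻¹ := by group
        _ = _ := by rw [hki]; group]
    exact mul_mem (cs.mem_closure_simple_image_iff.mpr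
      ⟨_, fun j hj => hQ j ((eraseIdx_sublist β k).subset hj), rfl⟩) (inv_mem hu)
  have hlen : ℓ (d⁻¹ * s i * d) = 1 := by
    have := hright _ hv
    rw [show d * (d⁻¹ * s i * d) = s i * d by group, hleft _ hsi, length_simple] at this
    omega
  obtain ⟨j, hj, hvj⟩ := cs.exists_mem_eq_simple_of_length_eq_one hv hlen
  exact ⟨j, hj, by rw [← hvj]; group⟩

theorem simple_mem_inf_map_conj {P Q : Set B} {d : W} {i j : B} (hi : i ∈ P) (hj : j ∈ Q)
    (hij : s i = d * s j * d⁻¹) :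
    s i ∈ Subgroup.closure (cs.simple '' P) ⊓
      Subgroup.map (MulAut.conj d).toMonoidHom (Subgroup.closure (cs.simple '' Q)) :=
  ⟨Subgroup.subset_closure ⟨i, hi, rfl⟩,
    s j, Subgroup.subset_closure ⟨j, hj, rfl⟩, by simp [hij]⟩

end CoxeterSystem

/-- (Kilmoyer) Let `W` be a Coxeter group with simple reflections indexed by `B`, and
`P, Q ⊆ B`. If `d` has minimal length in the double coset `W_P d W_Q`, then
`W_P ∩ d W_Q d⁻¹ = W_{P ∩ d(Q)}`, where `P ∩ d(Q)` corresponds to the set of simple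
reflections `s_i` with `i ∈ P` that are of the form `d s_j d⁻¹` with `j ∈ Q`. -/
theorem stmt_4 {B W : Type*} [Group W] {M : CoxeterMatrix B}
    (cs : CoxeterSystem M W) (P Q : Set B) (d : W)
    (hmin : ∀ p ∈ Subgroup.closure (cs.simple '' P),
            ∀ q ∈ Subgroup.closure (cs.simple '' Q),
            cs.length d ≤ cs.length (p * d * q)) :
    Subgroup.closure (cs.simple '' P) ⊓
      Subgroup.map (MulAut.conj d).toMonoidHom (Subgroup.closure (cs.simple '' Q)) =
    Subgroup.closure
      {w : W | ∃ i ∈ P, ∃ j ∈ Q, w = cs.simple i ∧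
        cs.simple i = d * cs.simple j * d⁻¹} := by
  refine le_antisymm (fun w hw => ?_) <| (Subgroup.closure_le _).mpr ?_
  · induction hn : cs.length w using Nat.strong_induction_on generalizing w with
    | _ n ih =>
      rcases eq_or_ne w 1 with rfl | hw1
      · exact one_mem _
      obtain ⟨hwP, u, hu, hwu⟩ := Subgroup.mem_inf.mp hw
      obtain ⟨i, hi, hdesc⟩ := cs.exists_isLeftDescent_of_mem_closure hwP hw1
      obtain ⟨j, hj, hij⟩ := cs.exists_simple_eq_conj_of_isLeftDescent hmin hwP hu
        (by simp [← hwu]) hi hdesc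
      rw [← cs.simple_mul_simple_cancel_left (w := w) i]
      exact mul_mem (Subgroup.subset_closure ⟨i, hi, j, hj, rfl, hij⟩)
        (ih _ (hn ▸ hdesc) _ (mul_mem (cs.simple_mem_inf_map_conj hi hj hij) hw) rfl)
  · rintro _ ⟨i, hi, j, hj, rfl, hij⟩
    exact cs.simple_mem_inf_map_conj hi hj hij
end

section
/- (Langlands combinatorial lemma) Let R be a finite root system in a Euclidean space E with base Δ. Every λ ∈ E can be written uniquely as λ = λ₋ + λ₊ where, for some subset Q ⊆ Δ, λ₋ is a linear combination of the coroots α∨ with α ∈ Q with nonpositive coefficients, and λ₊ satisfies ⟨α, λ₊⟩ = 0 for α ∈ Q and ⟨α, λ₊⟩ > 0 for α ∈ Δ \ Q. -/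
/-!
Let `C` be the cone of nonnegative combinations of the coroots `α∨`, `α ∈ Δ`; it is closed because
the coroots are linearly independent. If `-λ₋` is the nearest point of `C` to `-λ`, the
variational inequality of the projection says that `λ₊ = λ - λ₋` pairs nonnegatively with `C`
and is orthogonal to `λ₋`. Writing `λ₋ = -∑ d_α α∨` with `d ≥ 0`, orthogonality is the vanishing of
a sum of nonnegative terms `d_α ⟪α∨, λ₊⟫`, so `λ₋` only involves `Q = {α ∈ Δ | ⟪α, λ₊⟫ = 0}`.
Conversely any such decomposition has `⟪λ₋, λ₊⟫ = 0` and `⟪λ₋, λ₊'⟫ ≤ 0` against any other one,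
so `‖λ₋ - λ₋'‖² = ⟪λ₋ - λ₋', λ₊' - λ₊⟫ ≤ 0`; then `λ₊` and `Q` are determined as well.
-/

open scoped RealInnerProductSpace

theorem LinearIndependent.isClosed_map_positive {E ι : Type*} [AddCommGroup E] [Module ℝ E]
    [TopologicalSpace E] [IsTopologicalAddGroup E] [ContinuousSMul ℝ E] [T2Space E]
    [Fintype ι] {v : ι → E} (hv : LinearIndependent ℝ v) :
    IsClosed ((PointedCone.positive ℝ (ι → ℝ)).map (Fintype.linearCombination ℝ v) : Set E) :=
  (LinearMap.isClosedEmbedding_of_injective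
    (LinearMap.ker_eq_bot.2 hv.fintypeLinearCombination_injective)).isClosedMap _ isClosed_Ici

section InnerProductSpace

variable {E : Type*} [NormedAddCommGroup E] [InnerProductSpace ℝ E]

theorem PointedCone.exists_moreau_decomposition {C : PointedCone ℝ E}
    (hC : IsComplete (C : Set E)) (x : E) :
    ∃ p ∈ C, ⟪p, x + p⟫ = 0 ∧ ∀ c ∈ C, 0 ≤ ⟪c, x + p⟫ := by
  obtain ⟨p, hpC, hp⟩ :=
    exists_norm_eq_iInf_of_complete_convex ⟨0, C.zero_mem⟩ hC C.convex (-x)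
  rw [norm_eq_iInf_iff_real_inner_le_zero C.convex hpC] at hp
  have hvar : ∀ c ∈ C, ⟪p, x + p⟫ ≤ ⟪c, x + p⟫ := fun c hc => by
    have := hp c hc
    rw [real_inner_comm, ← neg_add', inner_neg_right, inner_sub_left] at this
    linarith
  have hle : ⟪p, x + p⟫ ≤ 0 := by simpa using hvar 0 C.zero_mem
  have hge : ⟪p, x + p⟫ ≤ 2 * ⟪p, x + p⟫ := by
    simpa [real_inner_smul_left] using hvar ((2 : ℝ) • p) (C.smul_mem zero_le_two hpC)
  have horth : ⟪p, x + p⟫ = 0 := by linarith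
  refine ⟨p, hpC, horth, fun c hc => ?_⟩
  simpa [horth] using hvar c hc

theorem eq_of_add_eq_add_of_inner_nonpos {m q m' q' : E} (h : m + q = m' + q')
    (hmq : ⟪m, q⟫ = 0) (hmq' : ⟪m', q'⟫ = 0) (hmq'_nonpos : ⟪m, q'⟫ ≤ 0)
    (hm'q_nonpos : ⟪m', q⟫ ≤ 0) :
    m = m' := by
  have hsub : m - m' = q' - q := by
    rw [sub_eq_sub_iff_add_eq_add, add_comm q', h]
  rw [← sub_eq_zero, ← real_inner_self_nonpos]
  nth_rewrite 2 [hsub]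
  simp only [inner_sub_left, inner_sub_right]
  linarith

theorem LinearIndependent.exists_nonneg_complementary [FiniteDimensional ℝ E] {ι : Type*}
    [Fintype ι] {v : ι → E} (hv : LinearIndependent ℝ v) (x : E) :
    ∃ d : ι → ℝ, 0 ≤ d ∧ ∀ i, 0 ≤ ⟪v i, x + ∑ j, d j • v j⟫ ∧
      d i * ⟪v i, x + ∑ j, d j • v j⟫ = 0 := by
  classical
  obtain ⟨p, hp, horth, hdual⟩ :=
    PointedCone.exists_moreau_decomposition hv.isClosed_map_positive.isComplete x
  obtain ⟨d, hd, rfl⟩ := PointedCone.mem_map.1 hp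
  simp only [Fintype.linearCombination_apply] at horth hdual
  set y := x + ∑ j, d j • v j
  have hvy : ∀ i, 0 ≤ ⟪v i, y⟫ := fun i =>
    hdual (v i) ⟨Pi.single i 1, by simp [Pi.le_def, Pi.single_apply, apply_ite], by simp⟩
  have hsum : ∑ i, d i * ⟪v i, y⟫ = 0 := by
    simpa only [sum_inner, real_inner_smul_left] using horth
  have hterms := (Finset.sum_eq_zero_iff_of_nonneg fun i _ => mul_nonneg (hd i) (hvy i)).1 hsum
  exact ⟨d, hd, fun i => ⟨hvy i, hterms i (Finset.mem_univ i)⟩⟩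

noncomputable def coroot (α : E) : E := (2 / ⟪α, α⟫) • α

theorem inner_coroot_left (α y : E) : ⟪coroot α, y⟫ = 2 / ⟪α, α⟫ * ⟪α, y⟫ :=
  real_inner_smul_left _ _ _

theorem two_div_inner_self_pos {α : E} (hα : α ≠ 0) : 0 < 2 / ⟪α, α⟫ :=
  div_pos two_pos (real_inner_self_pos.2 hα)

theorem LinearIndependent.coroot {ι : Type*} {v : ι → E} (hv : LinearIndependent ℝ v) :
    LinearIndependent ℝ (fun i => coroot (v i)) :=
  hv.units_smul fun i => Units.mk0 _ (two_div_inner_self_pos (hv.ne_zero i)).ne'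

def IsLanglandsDecomposition (Δ : Finset E) (lam : E) (Q : Finset E) (lamNeg lamPos : E) :
    Prop :=
  Q ⊆ Δ ∧ lam = lamNeg + lamPos ∧
    (∃ c : E → ℝ, (∀ α ∈ Q, c α ≤ 0) ∧ lamNeg = ∑ α ∈ Q, c α • coroot α) ∧
    (∀ α ∈ Q, ⟪α, lamPos⟫ = 0) ∧ ∀ α ∈ Δ, α ∉ Q → 0 < ⟪α, lamPos⟫

namespace IsLanglandsDecomposition

variable {Δ Q Q' : Finset E} {lam lamNeg lamPos lamNeg' lamPos' : E}

theorem inner_lamPos_nonneg (h : IsLanglandsDecomposition Δ lam Q lamNeg lamPos) :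
    ∀ α ∈ Δ, 0 ≤ ⟪α, lamPos⟫ := fun α hα => by
  by_cases hQ : α ∈ Q
  · exact (h.2.2.2.1 α hQ).ge
  · exact (h.2.2.2.2 α hα hQ).le

theorem inner_lamNeg_nonpos (h : IsLanglandsDecomposition Δ lam Q lamNeg lamPos) {y : E}
    (hy : ∀ α ∈ Δ, 0 ≤ ⟪α, y⟫) : ⟪lamNeg, y⟫ ≤ 0 := by
  obtain ⟨hQΔ, -, ⟨c, hc, rfl⟩, -, -⟩ := h
  rw [sum_inner]
  refine Finset.sum_nonpos fun α hα => ?_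
  rw [real_inner_smul_left, inner_coroot_left]
  exact mul_nonpos_of_nonpos_of_nonneg (hc α hα)
    (mul_nonneg (div_nonneg zero_le_two real_inner_self_nonneg) (hy α (hQΔ hα)))

theorem inner_lamNeg_lamPos (h : IsLanglandsDecomposition Δ lam Q lamNeg lamPos) :
    ⟪lamNeg, lamPos⟫ = 0 := by
  obtain ⟨-, -, ⟨c, -, rfl⟩, hQ, -⟩ := h
  rw [sum_inner]
  refine Finset.sum_eq_zero fun α hα => ?_
  rw [real_inner_smul_left, inner_coroot_left, hQ α hα, mul_zero, mul_zero]

theorem eq_filter (h : IsLanglandsDecomposition Δ lam Q lamNeg lamPos) :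
    Q = Δ.filter fun α => ⟪α, lamPos⟫ = 0 := by
  ext α
  simp only [Finset.mem_filter]
  refine ⟨fun hα => ⟨h.1 hα, h.2.2.2.1 α hα⟩, fun ⟨hαΔ, hα⟩ => ?_⟩
  by_contra hQ
  exact (h.2.2.2.2 α hαΔ hQ).ne' hα

theorem unique (h : IsLanglandsDecomposition Δ lam Q lamNeg lamPos)
    (h' : IsLanglandsDecomposition Δ lam Q' lamNeg' lamPos') :
    Q = Q' ∧ lamNeg = lamNeg' ∧ lamPos = lamPos' := by
  have hsum : lamNeg + lamPos = lamNeg' + lamPos' := h.2.1.symm.trans h'.2.1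
  have hneg : lamNeg = lamNeg' :=
    eq_of_add_eq_add_of_inner_nonpos hsum h.inner_lamNeg_lamPos h'.inner_lamNeg_lamPos
      (h.inner_lamNeg_nonpos h'.inner_lamPos_nonneg) (h'.inner_lamNeg_nonpos h.inner_lamPos_nonneg)
  have hpos : lamPos = lamPos' := by rwa [hneg, add_right_inj] at hsum
  exact ⟨by rw [h.eq_filter, h'.eq_filter, hpos], hneg, hpos⟩

end IsLanglandsDecomposition

theorem exists_isLanglandsDecomposition [FiniteDimensional ℝ E] {Δ : Finset E}
    (hΔ : LinearIndependent ℝ (fun α : Δ => (α : E))) (lam : E) :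
    ∃ Q lamNeg lamPos, IsLanglandsDecomposition Δ lam Q lamNeg lamPos := by
  classical
  obtain ⟨d, hd, hcompl⟩ := hΔ.coroot.exists_nonneg_complementary lam
  set lamPos := lam + ∑ β : Δ, d β • coroot (β : E)
  let c : E → ℝ := fun α => if hα : α ∈ Δ then -d ⟨α, hα⟩ else 0
  have hpos : ∀ α ∈ Δ, 0 ≤ ⟪α, lamPos⟫ := fun α hα => by
    have := (hcompl ⟨α, hα⟩).1
    rwa [inner_coroot_left, mul_nonneg_iff_of_pos_left (two_div_inner_self_pos
      (hΔ.ne_zero ⟨α, hα⟩))] at this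
  set Q := Δ.filter fun α => ⟪α, lamPos⟫ = 0
  have hc : ∀ α ∈ Δ, α ∉ Q → c α = 0 := fun α hα hQ => by
    have hne : ⟪coroot α, lamPos⟫ ≠ 0 := by
      rw [inner_coroot_left]
      exact mul_ne_zero (two_div_inner_self_pos (hΔ.ne_zero ⟨α, hα⟩)).ne'
        fun h => hQ (Finset.mem_filter.2 ⟨hα, h⟩)
    simp only [c, dif_pos hα, neg_eq_zero]
    exact (mul_eq_zero.1 (hcompl ⟨α, hα⟩).2).resolve_right hne
  have hsum : ∑ β : Δ, d β • coroot (β : E) = -∑ α ∈ Q, c α • coroot α :=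
    calc ∑ β : Δ, d β • coroot (β : E) = ∑ α ∈ Δ, (-c α) • coroot α := by
          rw [← Finset.sum_coe_sort Δ]
          exact Finset.sum_congr rfl fun β _ => by simp [c]
      _ = ∑ α ∈ Q, (-c α) • coroot α :=
          (Finset.sum_subset (Finset.filter_subset _ _) fun α hα hQ => by
            rw [hc α hα hQ, neg_zero, zero_smul]).symm
      _ = -∑ α ∈ Q, c α • coroot α := by simp only [neg_smul, Finset.sum_neg_distrib]
  refine ⟨Q, _, lamPos, Finset.filter_subset _ _, ?_, ⟨c, fun α hα => ?_, rfl⟩,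
    fun α hα => (Finset.mem_filter.1 hα).2, fun α hα hQ => ?_⟩
  · simp only [lamPos, hsum]
    abel
  · simp only [c, dif_pos (Finset.mem_filter.1 hα).1, neg_nonpos]
    exact hd _
  · exact (hpos α hα).lt_of_ne' fun h => hQ (Finset.mem_filter.2 ⟨hα, h⟩)

end InnerProductSpace

theorem stmt_13_general {E : Type*} [NormedAddCommGroup E] [InnerProductSpace ℝ E]
    [FiniteDimensional ℝ E]
    (Δ : Finset E)
    (hind : LinearIndependent ℝ (fun α : Δ => (α : E)))
    (lam : E) :
    ∃! t : Finset E × E × E,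
      t.1 ⊆ Δ ∧
      lam = t.2.1 + t.2.2 ∧
      (∃ c : E → ℝ, (∀ α ∈ t.1, c α ≤ 0) ∧
        t.2.1 = ∑ α ∈ t.1, c α • ((2 / ⟪α, α⟫) • α)) ∧
      (∀ α ∈ t.1, ⟪α, t.2.2⟫ = 0) ∧
      (∀ α ∈ Δ, α ∉ t.1 → 0 < ⟪α, t.2.2⟫) := by
  obtain ⟨Q, lamNeg, lamPos, h⟩ := exists_isLanglandsDecomposition hind lam
  refine ⟨(Q, lamNeg, lamPos), h, fun t ht => ?_⟩
  obtain ⟨hQ, hNeg, hPos⟩ :=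
    IsLanglandsDecomposition.unique (ht : IsLanglandsDecomposition Δ lam t.1 t.2.1 t.2.2) h
  exact Prod.ext hQ (Prod.ext hNeg hPos)

/-- (Langlands' combinatorial lemma) Let `Δ` be the base of a finite root system in a Euclidean
space `E` (a linearly independent set with pairwise non-positive inner products; the coroot of
`α` is `α∨ = (2/⟪α,α⟫) α`). Every `λ ∈ E` can be written uniquely as `λ = λ₋ + λ₊` where, for
some subset `Q ⊆ Δ`, `λ₋` is a linear combination of the coroots `α∨` with `α ∈ Q` with
nonpositive coefficients, and `λ₊` satisfies `⟪α, λ₊⟫ = 0` for `α ∈ Q` and `⟪α, λ₊⟫ > 0` for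
`α ∈ Δ \ Q`; the subset `Q` is also uniquely determined. -/
theorem stmt_13 {E : Type*} [NormedAddCommGroup E] [InnerProductSpace ℝ E]
    [FiniteDimensional ℝ E]
    (Δ : Finset E)
    (hind : LinearIndependent ℝ (fun α : Δ => (α : E)))
    (hobtuse : ∀ α ∈ Δ, ∀ β ∈ Δ, α ≠ β → ⟪α, β⟫ ≤ 0)
    (lam : E) :
    ∃! t : Finset E × E × E,
      t.1 ⊆ Δ ∧
      lam = t.2.1 + t.2.2 ∧
      (∃ c : E → ℝ, (∀ α ∈ t.1, c α ≤ 0) ∧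
        t.2.1 = ∑ α ∈ t.1, c α • ((2 / ⟪α, α⟫) • α)) ∧
      (∀ α ∈ t.1, ⟪α, t.2.2⟫ = 0) ∧
      (∀ α ∈ Δ, α ∉ t.1 → 0 < ⟪α, t.2.2⟫) :=
  stmt_13_general Δ hind lam
end
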